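/- arXiv:1904.08305 — 2 statements merged into one kernel-verified Lean document; each statement's English description precedes it below -/
import Mathlib

section
/- Let g : ℝ → ℝ be continuous and nonnegative, and let x : [0,T] → ℝ be piecewise linear on N equal sub-intervals of length δ = T/N, with constant speed v_n ∈ [0, V] on sub-interval n. Define for each n the durations δ̄_n = δ v_n / V and δ̂_n = δ − δ̄_n, a maximum-speed trajectory x̄ traversing the same segment [x((n−1)δ), x(nδ)] at speed V over duration δ̄_n, and a trajectory x̂ traversing the same segment at speed δ v_n / δ̂_n over duration δ̂_n (hovering when v_n = 0). Then ∫_0^T g(x(t)) dt = ∫_0^{T̄} g(x̄(t)) dt + ∫_0^{T̂} g(x̂(t)) dt, where T̄ = ∑_n δ̄_n and T̂ = ∑_n δ̂_n = T − T̄. -/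
/-!
On a segment traversed at constant speed `w` for a time `L`, the substitution `u = w t` gives
`∫₀ᴸ g(A + w t) dt = (L / D) ∫₀ᴰ g(A + u) du`, where `D = w L` is the displacement: the time
integral only sees the displacement and the duration. The three trajectories have the same
displacement `δ vₙ` on their `n`-th segments and the durations satisfy `δ = δ̄ₙ + δ̂ₙ`, so the
integrals agree segment by segment; summing over the segments gives the identity.
-/

open MeasureTheory Finset intervalIntegral

section Segments

variable {N : ℕ}

def segStart (d : Fin N → ℝ) (n : Fin N) : ℝ := ∑ i ∈ univ.filter (· < n), d i

-- Indexed by `ℕ`, as `intervalIntegral.sum_integral_adjacent_intervals` requires.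
def partialSum (d : Fin N → ℝ) (k : ℕ) : ℝ := ∑ i ∈ univ.filter (fun i : Fin N => (i : ℕ) < k), d i

theorem segStart_const (c : ℝ) (n : Fin N) : segStart (fun _ => c) n = n * c := by
  simp [segStart, filter_gt_eq_Iio]

theorem partialSum_zero (d : Fin N → ℝ) : partialSum d 0 = 0 := by
  simp [partialSum]

theorem partialSum_self (d : Fin N → ℝ) : partialSum d N = ∑ n, d n := by
  simp [partialSum]

theorem partialSum_val (d : Fin N → ℝ) (n : Fin N) : partialSum d n = segStart d n := rfl

theorem partialSum_val_add_one (d : Fin N → ℝ) (n : Fin N) :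
    partialSum d (n + 1) = segStart d n + d n := by
  have hinsert : univ.filter (fun i : Fin N => (i : ℕ) < n + 1)
      = insert n (univ.filter (fun i : Fin N => (i : ℕ) < n)) := by
    ext i
    simp only [mem_filter, mem_univ, true_and, mem_insert, Fin.ext_iff]
    omega
  rw [partialSum, hinsert, sum_insert (by simp), add_comm]
  rfl

theorem integral_eq_sum_integral_segStart (f : ℝ → ℝ) (d : Fin N → ℝ)
    (hf : ∀ n, IntervalIntegrable f volume (segStart d n) (segStart d n + d n)) :
    ∫ t in (0 : ℝ)..∑ n, d n, f t = ∑ n, ∫ t in segStart d n..segStart d n + d n, f t := by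
  have hglue := sum_integral_adjacent_intervals (a := partialSum d) (n := N) (f := f)
    fun k hk => by
      have hint := hf ⟨k, hk⟩
      rwa [← partialSum_val_add_one, ← partialSum_val] at hint
  rw [partialSum_zero, partialSum_self, ← Fin.sum_univ_eq_sum_range] at hglue
  simpa only [partialSum_val, partialSum_val_add_one] using hglue.symm

end Segments

section Affine

variable {g y : ℝ → ℝ} {a L A w : ℝ}

theorem intervalIntegrable_comp_of_eqOn_affine (hg : Continuous g) (hL : 0 ≤ L)
    (hy : ∀ t ∈ Set.Ioc a (a + L), y t = A + w * (t - a)) :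
    IntervalIntegrable (fun t => g (y t)) volume a (a + L) := by
  have hcont : Continuous fun t => g (A + w * (t - a)) := by fun_prop
  refine (intervalIntegrable_congr fun t ht => ?_).mpr (hcont.intervalIntegrable a (a + L))
  rw [Set.uIoc_of_le (by linarith)] at ht
  simp only [hy t ht]

theorem integral_comp_of_eqOn_affine (hL : 0 ≤ L)
    (hy : ∀ t ∈ Set.Ioc a (a + L), y t = A + w * (t - a)) :
    ∫ t in a..a + L, g (y t) = ∫ t in (0 : ℝ)..L, g (A + w * t) := by
  have hcongr : ∫ t in a..a + L, g (y t) = ∫ t in a..a + L, g (A + w * (t - a)) := by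
    refine integral_congr_ae (ae_of_all _ fun t ht => ?_)
    rw [Set.uIoc_of_le (by linarith)] at ht
    rw [hy t ht]
  simpa using hcongr.trans (integral_comp_sub_right (fun s => g (A + w * s)) a)

theorem integral_comp_add_mul_of_mul_eq (g : ℝ → ℝ) {D : ℝ} (hD : D ≠ 0) (h : w * L = D) :
    ∫ t in (0 : ℝ)..L, g (A + w * t) = L / D * ∫ u in (0 : ℝ)..D, g (A + u) := by
  have hw : w ≠ 0 := by rintro rfl; simp_all
  have hL : L ≠ 0 := by rintro rfl; simp_all
  have hsubst := integral_comp_mul_left (a := 0) (b := L) (fun u => g (A + u)) hw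
  rw [mul_zero, h, smul_eq_mul] at hsubst
  rw [hsubst, ← h]
  field_simp

end Affine

theorem integral_comp_piecewise_affine {g : ℝ → ℝ} (hg : Continuous g) {N : ℕ} (y : ℝ → ℝ)
    (d w A : Fin N → ℝ) (hd : ∀ n, 0 ≤ d n)
    (hy : ∀ n, ∀ t ∈ Set.Ioc (segStart d n) (segStart d n + d n),
      y t = A n + w n * (t - segStart d n)) :
    ∫ t in (0 : ℝ)..∑ n, d n, g (y t) = ∑ n, ∫ t in (0 : ℝ)..d n, g (A n + w n * t) := by
  rw [integral_eq_sum_integral_segStart _ d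
    fun n => intervalIntegrable_comp_of_eqOn_affine hg (hd n) (hy n)]
  exact sum_congr rfl fun n _ => integral_comp_of_eqOn_affine (hd n) (hy n)

theorem integral_segment_eq_maxSpeed_add_slow (g : ℝ → ℝ) (A V v δ δb δh : ℝ) (hV : V ≠ 0)
    (hδb : δb = δ * v / V) (hδh : δh = δ - δb) :
    ∫ t in (0 : ℝ)..δ, g (A + v * t)
      = (∫ t in (0 : ℝ)..δb, g (A + V * t)) + ∫ t in (0 : ℝ)..δh, g (A + δ * v / δh * t) := by
  by_cases hD : δ * v = 0
  · rcases mul_eq_zero.mp hD with rfl | rfl <;> simp [hδb, hδh]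
  have hx := integral_comp_add_mul_of_mul_eq g (A := A) hD (mul_comm v δ)
  have hxb := integral_comp_add_mul_of_mul_eq g (A := A) hD
    (show V * δb = δ * v by rw [hδb]; field_simp)
  have hxh : ∫ t in (0 : ℝ)..δh, g (A + δ * v / δh * t)
      = δh / (δ * v) * ∫ u in (0 : ℝ)..δ * v, g (A + u) := by
    rcases eq_or_ne δh 0 with h0 | h0
    · simp [h0]
    · exact integral_comp_add_mul_of_mul_eq g hD (by field_simp)
  rw [hx, hxb, hxh, hδh]
  ring

theorem stmt_3_general (g : ℝ → ℝ) (hg_cont : Continuous g)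
    (T V : ℝ) (hT : 0 < T) (hV : 0 < V)
    (N : ℕ) (hN : 0 < N) (v : Fin N → ℝ)
    (hv : ∀ n, 0 ≤ v n ∧ v n ≤ V)
    (δ : ℝ) (hδ : δ = T / N)
    (x xb xh : ℝ → ℝ)
    -- x is piecewise linear with speed v n on the n-th subinterval
    (hx : ∀ n : Fin N, ∀ t ∈ Set.Ioc ((n : ℝ) * δ) (((n : ℝ) + 1) * δ),
      x t = x ((n : ℝ) * δ) + v n * (t - (n : ℝ) * δ))
    (δb δh : Fin N → ℝ)
    (hδb : ∀ n, δb n = δ * v n / V)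
    (hδh : ∀ n, δh n = δ - δb n)
    -- xb traverses each segment at maximum speed V
    (hxb : ∀ n : Fin N, ∀ t ∈ Set.Ioc (∑ i ∈ Finset.univ.filter (· < n), δb i)
        ((∑ i ∈ Finset.univ.filter (· < n), δb i) + δb n),
      xb t = x ((n : ℝ) * δ) + V * (t - ∑ i ∈ Finset.univ.filter (· < n), δb i))
    -- xh traverses each segment at speed δ * v n / δh n (hovering when v n = 0)
    (hxh : ∀ n : Fin N, ∀ t ∈ Set.Ioc (∑ i ∈ Finset.univ.filter (· < n), δh i)
        ((∑ i ∈ Finset.univ.filter (· < n), δh i) + δh n),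
      xh t = x ((n : ℝ) * δ) + (δ * v n / δh n) * (t - ∑ i ∈ Finset.univ.filter (· < n), δh i)) :
    ∫ t in (0:ℝ)..T, g (x t)
      = (∫ t in (0:ℝ)..(∑ n, δb n), g (xb t))
        + ∫ t in (0:ℝ)..(∑ n, δh n), g (xh t) := by
  have hδ0 : 0 ≤ δ := hδ ▸ by positivity
  have hT_sum : ∑ _n : Fin N, δ = T := by
    rw [sum_const, card_univ, Fintype.card_fin, nsmul_eq_mul, hδ]
    field_simp
  have hx' : ∀ n, ∀ t ∈ Set.Ioc (segStart (fun _ => δ) n) (segStart (fun _ => δ) n + δ),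
      x t = x (n * δ) + v n * (t - segStart (fun _ => δ) n) := by
    intro n t ht
    rw [segStart_const] at ht ⊢
    exact hx n t (by rwa [add_one_mul])
  have hδb_nonneg : ∀ n, 0 ≤ δb n := fun n => by
    rw [hδb n]; have := (hv n).1; positivity
  have hδh_nonneg : ∀ n, 0 ≤ δh n := fun n => by
    rw [hδh n, hδb n, sub_nonneg, div_le_iff₀ hV]
    exact mul_le_mul_of_nonneg_left (hv n).2 hδ0
  rw [← hT_sum, integral_comp_piecewise_affine hg_cont x _ v _ (fun _ => hδ0) hx',
    integral_comp_piecewise_affine hg_cont xb δb (fun _ => V) _ hδb_nonneg hxb,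
    integral_comp_piecewise_affine hg_cont xh δh (fun n => δ * v n / δh n) _ hδh_nonneg hxh,
    ← sum_add_distrib]
  exact sum_congr rfl fun n _ =>
    integral_segment_eq_maxSpeed_add_slow g _ V (v n) δ _ _ hV.ne' (hδb n) (hδh n)

theorem stmt_3 (g : ℝ → ℝ) (hg_cont : Continuous g) (hg_nn : ∀ y, 0 ≤ g y)
    (T V : ℝ) (hT : 0 < T) (hV : 0 < V)
    (N : ℕ) (hN : 0 < N) (v : Fin N → ℝ)
    (hv : ∀ n, 0 ≤ v n ∧ v n ≤ V)
    (δ : ℝ) (hδ : δ = T / N)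
    (x xb xh : ℝ → ℝ)
    -- x is piecewise linear with speed v n on the n-th subinterval
    (hx : ∀ n : Fin N, ∀ t ∈ Set.Ioc ((n : ℝ) * δ) (((n : ℝ) + 1) * δ),
      x t = x ((n : ℝ) * δ) + v n * (t - (n : ℝ) * δ))
    (δb δh : Fin N → ℝ)
    (hδb : ∀ n, δb n = δ * v n / V)
    (hδh : ∀ n, δh n = δ - δb n)
    -- xb traverses each segment at maximum speed V
    (hxb : ∀ n : Fin N, ∀ t ∈ Set.Ioc (∑ i ∈ Finset.univ.filter (· < n), δb i)
        ((∑ i ∈ Finset.univ.filter (· < n), δb i) + δb n),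
      xb t = x ((n : ℝ) * δ) + V * (t - ∑ i ∈ Finset.univ.filter (· < n), δb i))
    -- xh traverses each segment at speed δ * v n / δh n (hovering when v n = 0)
    (hxh : ∀ n : Fin N, ∀ t ∈ Set.Ioc (∑ i ∈ Finset.univ.filter (· < n), δh i)
        ((∑ i ∈ Finset.univ.filter (· < n), δh i) + δh n),
      xh t = x ((n : ℝ) * δ) + (δ * v n / δh n) * (t - ∑ i ∈ Finset.univ.filter (· < n), δh i)) :
    ∫ t in (0:ℝ)..T, g (x t)
      = (∫ t in (0:ℝ)..(∑ n, δb n), g (xb t))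
        + ∫ t in (0:ℝ)..(∑ n, δh n), g (xh t) :=
  stmt_3_general g hg_cont T V hT hV N hN v hv δ hδ x xb xh hx δb δh hδb hδh hxb hxh
end

section
/- At an optimizer of maximize ∑_k μ_k b_k ln(1 + c_k/b_k) subject to b_k > 0, ∑_k b_k = 1 (μ_k, c_k > 0), there exists η ≥ 0 such that for every k: μ_k [ln(1 + c_k/b_k) − (c_k/b_k)/(1 + c_k/b_k)] = η, and this stationarity condition is solved by c_k/b_k = −(1 + W(−e^{−(η/μ_k + 1)}))/W(−e^{−(η/μ_k + 1)}), where W is the principal branch of the Lambert W function. -/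
/-!
At an interior maximiser of a separable objective `∑ₖ gₖ(bₖ)` on the simplex, moving mass `t`
from coordinate `j` to coordinate `i` gives a one-variable function with a local maximum at
`t = 0`, so all marginal utilities `gₖ'(bₖ)` agree; their common value is `η`. For
`gₖ(y) = μₖ y log(1 + cₖ/y)` the marginal utility is `μₖ (log(1 + x) - x/(1 + x))` with
`x = cₖ/bₖ`, which is positive, and `W = -1/(1 + x)` solves `W eᵂ = -e^{-(η/μₖ + 1)}`.
-/

open Real Filter Topology

lemma hasDerivAt_mul_log_one_add_div {c x : ℝ} (hx : x ≠ 0) (hcx : 1 + c / x ≠ 0) :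
    HasDerivAt (fun y => y * log (1 + c / y)) (log (1 + c / x) - (c / x) / (1 + c / x)) x := by
  have hinner : HasDerivAt (fun y => 1 + c / y) (-(c / x ^ 2)) x := by
    simpa [div_eq_mul_inv] using ((hasDerivAt_inv hx).const_mul c).const_add 1
  refine ((hasDerivAt_id' x).fun_mul (hinner.log hcx)).congr_deriv ?_
  field_simp
  ring

lemma div_one_add_lt_log_one_add {x : ℝ} (hx : 0 < x) : x / (1 + x) < log (1 + x) := by
  have hinv : (1 + x)⁻¹ ≠ 1 := inv_ne_one.2 (by linarith)
  have := log_lt_sub_one_of_pos (by positivity) hinv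
  rw [log_inv] at this
  have hsplit : x / (1 + x) = 1 - (1 + x)⁻¹ := by field_simp; ring
  linarith

lemma exists_mul_exp_eq_and_eq_neg_one_add_div {x : ℝ} (hx : 0 < 1 + x) :
    ∃ W : ℝ, W * exp W = -exp (-((log (1 + x) - x / (1 + x)) + 1)) ∧ x = -(1 + W) / W := by
  refine ⟨-(1 + x)⁻¹, ?_, ?_⟩
  · have hexp : -((log (1 + x) - x / (1 + x)) + 1) = log (1 + x)⁻¹ + -(1 + x)⁻¹ := by
      rw [log_inv]
      field_simp
      ring
    rw [hexp, exp_add, exp_log (inv_pos.2 hx)]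
    ring
  · field_simp
    ring

lemma hasDerivAt_eq_of_isMaxOn_sum {ι : Type*} [Fintype ι] [DecidableEq ι]
    {g : ι → ℝ → ℝ} {g' : ι → ℝ} {b : ι → ℝ} {s : ℝ} (hb : ∀ k, 0 < b k) (hbsum : ∑ k, b k = s)
    (hg : ∀ k, HasDerivAt (g k) (g' k) (b k))
    (hmax : IsMaxOn (fun b' => ∑ k, g k (b' k)) {b' | (∀ k, 0 < b' k) ∧ ∑ k, b' k = s} b)
    (i j : ι) : g' i = g' j := by
  set e : ι → ℝ := Pi.single i 1 - Pi.single j 1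
  have hline : ∀ k, HasDerivAt (fun t : ℝ => b k + t * e k) (e k) 0 := fun k => by
    simpa using ((hasDerivAt_id (0 : ℝ)).mul_const (e k)).const_add (b k)
  have hderiv : HasDerivAt (fun t => ∑ k, g k (b k + t * e k)) (∑ k, g' k * e k) 0 :=
    HasDerivAt.fun_sum fun k _ => HasDerivAt.comp_of_eq 0 (hg k) (hline k) (by simp)
  have hpos : ∀ᶠ t in 𝓝 (0 : ℝ), ∀ k, 0 < b k + t * e k :=
    eventually_all.2 fun k => continuousAt_const.eventually_lt (hline k).continuousAt (by simpa using hb k)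
  have hlocal : IsLocalMax (fun t => ∑ k, g k (b k + t * e k)) 0 := by
    filter_upwards [hpos] with t ht
    have hsum : ∑ k, (b k + t * e k) = s := by
      simp [e, Finset.sum_add_distrib, ← Finset.mul_sum, hbsum]
    simpa using hmax ⟨ht, hsum⟩
  have hzero := hlocal.hasDerivAt_eq_zero hderiv
  simp only [e, Pi.sub_apply, mul_sub, Finset.sum_sub_distrib] at hzero
  simpa [Pi.single_apply, sub_eq_zero] using hzero

theorem stmt_14 (K : ℕ) (hK : 0 < K) (c μ : Fin K → ℝ)
    (hc : ∀ k, 0 < c k) (hμ : ∀ k, 0 < μ k)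
    (b : Fin K → ℝ) (hbpos : ∀ k, 0 < b k) (hbsum : ∑ k, b k = 1)
    (hopt : IsMaxOn (fun b' : Fin K → ℝ => ∑ k, μ k * (b' k * Real.log (1 + c k / b' k)))
      {b' : Fin K → ℝ | (∀ k, 0 < b' k) ∧ ∑ k, b' k = 1} b) :
    ∃ η : ℝ, 0 ≤ η ∧ ∀ k,
      μ k * (Real.log (1 + c k / b k) - (c k / b k) / (1 + c k / b k)) = η ∧
      ∃ W : ℝ, W * Real.exp W = -Real.exp (-(η / μ k + 1)) ∧
        c k / b k = -(1 + W) / W := by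
  set F : Fin K → ℝ := fun k =>
    μ k * (log (1 + c k / b k) - (c k / b k) / (1 + c k / b k))
  have hx : ∀ k, 0 < c k / b k := fun k => div_pos (hc k) (hbpos k)
  have hF : ∀ i j, F i = F j :=
    hasDerivAt_eq_of_isMaxOn_sum hbpos hbsum
      (fun k => (hasDerivAt_mul_log_one_add_div (hbpos k).ne' (by linarith [hx k])).const_mul (μ k))
      hopt
  let k₀ : Fin K := ⟨0, hK⟩
  refine ⟨F k₀, (mul_pos (hμ k₀) (sub_pos.2 (div_one_add_lt_log_one_add (hx k₀)))).le,
    fun k => ⟨hF k k₀, ?_⟩⟩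
  rw [← hF k k₀, mul_div_cancel_left₀ _ (hμ k).ne']
  exact exists_mul_exp_eq_and_eq_neg_one_add_div (by linarith [hx k])
end
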